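/- Let d be an odd prime and κ an integer coprime to d with gcd(κ² − 1, d) = 1 such that either κ generates the cyclic group (ℤ/dℤ)ˣ, or d ≡ 3 mod 4 and κ has multiplicative order (d−1)/2 modulo d. Let a, b, c be integers and let g ∈ ℂ^d be a unit vector satisfying g_{κi mod d} = ω^{a·C(i,2)+b·i+c}·g_i for all i = 0,…,d−1. Then the set {|⟨g, M^k T^ℓ g⟩| : (k,ℓ) ∈ (ℤ/dℤ)²} has at most d + 2 elements, and rank(G(g)) ≡ d² mod (d − 1). -/

import Mathlib

open Complex Finset

noncomputable section

/-- `gw d` is the primitive `d`-th root of unity `ω = exp(2πi/d)`. -/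
def gw (d : ℕ) : ℂ := Complex.exp (2 * Real.pi * Complex.I / d)

/-- `modT d k l g = M^k T^ℓ g`, where `(Mg)_n = ω^n g_n` and `(Tg)_n = g_{n-1}`. -/
def modT (d : ℕ) (k l : ZMod d) (g : ZMod d → ℂ) : ZMod d → ℂ :=
  fun n => gw d ^ (k.val * n.val) * g (n - l)

/-- `inn d x y = ⟨x,y⟩ = Σ_n x_n conj(y_n)`. -/
def inn (d : ℕ) [NeZero d] (x y : ZMod d → ℂ) : ℂ :=
  ∑ n : ZMod d, x n * (starRingEnd ℂ) (y n)

/-- The `d² × d²` Gram matrix `G(g)` with entries `|⟨M^k T^ℓ g, M^{k'} T^{ℓ'} g⟩|²`. -/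
def Gmat (d : ℕ) [NeZero d] (g : ZMod d → ℂ) :
    Matrix (ZMod d × ZMod d) (ZMod d × ZMod d) ℂ :=
  fun p q =>
    ((‖inn d (modT d p.1 p.2 g) (modT d q.1 q.2 g)‖ ^ 2 : ℝ) : ℂ)

/-!
Write `A(k, ℓ) = |⟨g, M^k T^ℓ g⟩|`. The symmetry of `g` under `i ↦ κ i` gives
`A(k, κ ℓ) = A(κ k - a ℓ, ℓ)`, and always `A(-k, -ℓ) = A(k, ℓ)`. After the shear
`(u, ℓ) ↦ (u + t ℓ, ℓ)` with `t = a / (κ² - 1)` both become invariance under the torus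
`(u, ℓ) ↦ (v u, v⁻¹ ℓ)` for `v = κ` and `v = -1`, and these two generate `(ℤ/dℤ)ˣ`. A
torus-invariant function on `𝔽_d²` is determined by its values at `(1, c)`, `(0, 1)` and
`(0, 0)`, which bounds the number of values by `d + 2`. The Gram matrix depends only on
`(k' - k, ℓ' - ℓ)`, so the Fourier transform on `(ℤ/dℤ)²` diagonalises it and its rank is the
size of the support of the transform of `A²`. After the dual shear that transform is again
torus-invariant, and it is nonzero at the origin; the nonzero torus orbits have `d - 1`
elements, so the rank is `≡ 1 ≡ d² mod (d - 1)`.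
-/

section Torus

variable {R α : Type*}

def torus [CommMonoid R] (v : Rˣ) : R × R ≃ R × R :=
  (Units.mulLeft v).prodCongr (Units.mulLeft v⁻¹)

@[simp] lemma torus_apply [CommMonoid R] (v : Rˣ) (p : R × R) :
    torus v p = (v * p.1, ↑v⁻¹ * p.2) := rfl

def IsTorusInvariant [CommMonoid R] (f : R × R → α) : Prop :=
  ∀ v p, f (torus v p) = f p

lemma isTorusInvariant_of_closure_eq_top [CommMonoid R] {f : R × R → α} {s : Set Rˣ}
    (hs : Subgroup.closure s = ⊤) (hf : ∀ v ∈ s, ∀ p, f (torus v p) = f p) :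
    IsTorusInvariant f := by
  intro v
  induction (hs ▸ Subgroup.mem_top v : v ∈ Subgroup.closure s) using
    Subgroup.closure_induction with
  | mem v hv => exact hf v hv
  | one => simp
  | mul v w _ _ hv hw =>
    intro p
    simpa [mul_assoc, mul_comm (w⁻¹ : Rˣ).val] using (hv (torus w p)).trans (hw p)
  | inv v _ hv =>
    intro p
    simpa using (hv (torus v⁻¹ p)).symm

def shear {R : Type*} [Ring R] (t : R) : R × R ≃ R × R where
  toFun p := (p.1 + t * p.2, p.2)
  invFun p := (p.1 - t * p.2, p.2)
  left_inv p := by simp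
  right_inv p := by simp

@[simp] lemma shear_apply {R : Type*} [Ring R] (t : R) (p : R × R) :
    shear t p = (p.1 + t * p.2, p.2) := rfl

namespace IsTorusInvariant

variable {F : Type*} [Field F] {f : F × F → α}

lemma apply_of_fst_ne_zero (hf : IsTorusInvariant f) {u : F} (hu : u ≠ 0) (l : F) :
    f (u, l) = f (1, u * l) := by
  simpa [hu] using (hf (Units.mk0 u hu)⁻¹ (u, l)).symm

lemma apply_zero_of_snd_ne_zero (hf : IsTorusInvariant f) {l : F} (hl : l ≠ 0) :
    f (0, l) = f (0, 1) := by
  simpa using hf (Units.mk0 l hl)⁻¹ (0, 1)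

variable [Fintype F]

lemma ncard_range_le (hf : IsTorusInvariant f) :
    (Set.range f).ncard ≤ Fintype.card F + 2 := by
  have hS : (Set.range fun c => f (1, c)).ncard ≤ Fintype.card F := by
    rw [← Set.image_univ, ← Nat.card_eq_fintype_card, ← Set.ncard_univ]
    exact Set.ncard_image_le Set.finite_univ
  set S := Set.range fun c => f (1, c)
  have hsub : Set.range f ⊆ insert (f (0, 0)) (insert (f (0, 1)) S) := by
    rintro _ ⟨⟨u, l⟩, rfl⟩
    by_cases hu : u = 0
    · by_cases hl : l = 0
      · simp [hu, hl]
      · simp [hu, hf.apply_zero_of_snd_ne_zero hl]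
    · simp [S, hf.apply_of_fst_ne_zero hu]
  calc (Set.range f).ncard
      ≤ (insert (f (0, 0)) (insert (f (0, 1)) S)).ncard :=
        Set.ncard_le_ncard hsub (Set.toFinite _)
    _ ≤ (insert (f (0, 1)) S).ncard + 1 := Set.ncard_insert_le _ _
    _ ≤ S.ncard + 1 + 1 := by gcongr; exact Set.ncard_insert_le _ _
    _ ≤ Fintype.card F + 2 := by omega

lemma sum_eq_card_sub_one_smul_add {M : Type*} [AddCommMonoid M] {f : F × F → M}
    (hf : IsTorusInvariant f) :
    ∑ p, f p = (Fintype.card F - 1) • (∑ c, f (1, c) + f (0, 1)) + f (0, 0) := by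
  classical
  have hcompl : #({0}ᶜ : Finset F) = Fintype.card F - 1 := by
    rw [card_compl, card_singleton]
  have hfst : ∀ u ∈ ({0}ᶜ : Finset F), ∑ l, f (u, l) = ∑ c, f (1, c) := by
    intro u hu
    have hu : u ≠ 0 := by simpa using hu
    simp only [hf.apply_of_fst_ne_zero hu]
    exact Fintype.sum_bijective _ (mulLeft_bijective₀ u hu) _ _ fun _ => rfl
  have hzero : ∑ l ∈ ({0}ᶜ : Finset F), f (0, l) = ∑ _l ∈ ({0}ᶜ : Finset F), f (0, 1) :=
    sum_congr rfl fun l hl => hf.apply_zero_of_snd_ne_zero (by simpa using hl)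
  rw [Fintype.sum_prod_type, Fintype.sum_eq_add_sum_compl 0, sum_congr rfl hfst,
    Fintype.sum_eq_add_sum_compl 0, hzero, sum_const, sum_const, hcompl, smul_add]
  abel

lemma card_ne_zero_modEq [Zero α] [DecidableEq α] (hf : IsTorusInvariant f) (h0 : f 0 ≠ 0) :
    Fintype.card {p // f p ≠ 0} ≡ 1 [MOD Fintype.card F - 1] := by
  have hind : IsTorusInvariant fun p => if f p ≠ 0 then 1 else 0 := fun v p => by
    simp only [hf v p]
  rw [Fintype.card_subtype, card_filter, hind.sum_eq_card_sub_one_smul_add]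
  simp [Nat.ModEq, show f (0, 0) ≠ 0 from h0]

end IsTorusInvariant

end Torus

lemma Subgroup.closure_pair_eq_top_of_card_dvd_lcm {G : Type*} [Group G] [Finite G] {x y : G}
    (h : Nat.card G ∣ (orderOf x).lcm (orderOf y)) : Subgroup.closure {x, y} = ⊤ := by
  set H := Subgroup.closure {x, y}
  have hx : orderOf x ∣ Nat.card H := H.orderOf_dvd_natCard (subset_closure (by simp))
  have hy : orderOf y ∣ Nat.card H := H.orderOf_dvd_natCard (subset_closure (by simp))
  exact H.eq_top_of_card_eq <|
    Nat.dvd_antisymm H.card_subgroup_dvd_card (h.trans (Nat.lcm_dvd hx hy))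

lemma ZMod.orderOf_units_neg_one {p : ℕ} (hp : p ≠ 2) [Nontrivial (ZMod p)] :
    orderOf (-1 : (ZMod p)ˣ) = 2 := by
  rw [← orderOf_units, Units.coe_neg_one, orderOf_neg_one, ZMod.ringChar_zmod_n, if_neg hp]

lemma ZMod.closure_units_neg_one_eq_top {p : ℕ} [Fact p.Prime] {κ : (ZMod p)ˣ}
    (hκ : orderOf κ = p - 1 ∨ (p % 4 = 3 ∧ orderOf κ = (p - 1) / 2)) :
    Subgroup.closure {κ, -1} = ⊤ := by
  apply Subgroup.closure_pair_eq_top_of_card_dvd_lcm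
  rw [Nat.card_eq_fintype_card, ZMod.card_units]
  rcases hκ with hκ | ⟨hp4, hκ⟩
  · exact hκ ▸ Nat.dvd_lcm_left _ _
  · have hodd : Odd ((p - 1) / 2) := Nat.odd_iff.mpr (by omega)
    rw [hκ, ZMod.orderOf_units_neg_one (by omega),
      (Nat.coprime_two_right.mpr hodd).lcm_eq_mul, Nat.div_mul_cancel (by omega)]

open ZMod ComplexConjugate

section Ambiguity

variable {n : ℕ}

lemma modT_zero_zero (g : ZMod n → ℂ) : modT n 0 0 g = g := by
  ext m
  simp [modT]

variable [NeZero n]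

lemma gw_zpow (m : ℤ) : gw n ^ m = stdAddChar (m : ZMod n) := by
  rw [stdAddChar_coe, gw, ← Complex.exp_int_mul]
  ring_nf

lemma gw_pow_val_mul (k m : ZMod n) : gw n ^ (k.val * m.val) = stdAddChar (k * m) := by
  rw [← zpow_natCast, gw_zpow]
  push_cast
  rw [natCast_zmod_val, natCast_zmod_val]

lemma norm_stdAddChar (x : ZMod n) : ‖stdAddChar x‖ = 1 := Circle.norm_coe _

lemma conj_inn (x y : ZMod n → ℂ) : conj (inn n x y) = inn n y x := by
  simp only [inn, map_sum, map_mul, conj_conj, mul_comm (x _)]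

lemma inn_modT (g : ZMod n → ℂ) (k l : ZMod n) :
    inn n g (modT n k l g) = ∑ m, stdAddChar (-(k * m)) * g m * conj (g (m - l)) := by
  simp only [inn, modT, gw_pow_val_mul, map_mul, ← AddChar.map_neg_eq_conj]
  exact sum_congr rfl fun m _ => by ring

lemma inn_modT_modT (g : ZMod n → ℂ) (k l k' l' : ZMod n) :
    inn n (modT n k l g) (modT n k' l' g) =
      stdAddChar ((k - k') * l) * inn n g (modT n (k' - k) (l' - l) g) := by
  rw [inn_modT, inn, mul_sum, ← Equiv.sum_comp (Equiv.addRight l)]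
  refine sum_congr rfl fun m _ => ?_
  simp only [modT, Equiv.coe_addRight, gw_pow_val_mul, map_mul, ← AddChar.map_neg_eq_conj,
    add_sub_cancel_right, show m + l - l' = m - (l' - l) by ring]
  have hphase : stdAddChar (k * (m + l)) * stdAddChar (-(k' * (m + l))) =
      stdAddChar ((k - k') * l) * stdAddChar (-((k' - k) * m)) := by
    simp only [← AddChar.map_add_eq_mul]
    ring_nf
  linear_combination (g m * conj (g (m - (l' - l)))) * hphase

def ambiguity (n : ℕ) [NeZero n] (g : ZMod n → ℂ) (p : ZMod n × ZMod n) : ℝ :=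
  ‖inn n g (modT n p.1 p.2 g)‖

lemma norm_inn_modT_modT (g : ZMod n → ℂ) (k l k' l' : ZMod n) :
    ‖inn n (modT n k l g) (modT n k' l' g)‖ = ambiguity n g (k' - k, l' - l) := by
  rw [inn_modT_modT, norm_mul, norm_stdAddChar, one_mul, ambiguity]

lemma ambiguity_neg (g : ZMod n → ℂ) (p : ZMod n × ZMod n) :
    ambiguity n g (-p) = ambiguity n g p := by
  obtain ⟨k, l⟩ := p
  have h := norm_inn_modT_modT g k l 0 0
  rw [← conj_inn, Complex.norm_conj, norm_inn_modT_modT] at h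
  simpa using h.symm

lemma ambiguity_zero {g : ZMod n → ℂ} (hg : ∑ m, ‖g m‖ ^ 2 = 1) :
    ambiguity n g 0 = 1 := by
  simp only [ambiguity, Prod.fst_zero, Prod.snd_zero, modT_zero_zero, inn, Complex.mul_conj,
    Complex.normSq_eq_norm_sq, ← Complex.ofReal_sum, hg, Complex.ofReal_one, norm_one]

end Ambiguity

section Symmetry

variable {n : ℕ} [NeZero n]

lemma inn_modT_unit_mul {g : ZMod n → ℂ} (κ : (ZMod n)ˣ) {α β γ : ZMod n}
    (hg : ∀ i, g (κ * i) = stdAddChar (α * i ^ 2 + β * i + γ) * g i) (k l : ZMod n) :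
    inn n g (modT n k (κ * l) g) =
      stdAddChar (β * l - α * l ^ 2) * inn n g (modT n (κ * k - 2 * α * l) l g) := by
  rw [inn_modT, inn_modT, mul_sum, ← Equiv.sum_comp (Units.mulLeft κ)]
  refine sum_congr rfl fun m _ => ?_
  simp only [Units.mulLeft_apply, ← mul_sub, hg, map_mul, ← AddChar.map_neg_eq_conj]
  have hphase : stdAddChar (-(k * ((κ : ZMod n) * m))) * stdAddChar (α * m ^ 2 + β * m + γ) *
      stdAddChar (-(α * (m - l) ^ 2 + β * (m - l) + γ)) =
      stdAddChar (β * l - α * l ^ 2) * stdAddChar (-(((κ : ZMod n) * k - 2 * α * l) * m)) := by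
    simp only [← AddChar.map_add_eq_mul]
    ring_nf
  linear_combination (g m * conj (g (m - l))) * hphase

lemma ambiguity_unit_mul_snd {g : ZMod n → ℂ} (κ : (ZMod n)ˣ) {α β γ : ZMod n}
    (hg : ∀ i, g (κ * i) = stdAddChar (α * i ^ 2 + β * i + γ) * g i) (k l : ZMod n) :
    ambiguity n g (k, κ * l) = ambiguity n g (κ * k - 2 * α * l, l) := by
  rw [ambiguity, inn_modT_unit_mul κ hg, norm_mul, norm_stdAddChar, one_mul, ambiguity]

lemma isTorusInvariant_ambiguity_comp_shear {g : ZMod n → ℂ} {κ : (ZMod n)ˣ}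
    (hκ : Subgroup.closure {κ, -1} = ⊤) {α β γ t : ZMod n} (ht : t * (κ ^ 2 - 1) = 2 * α)
    (hg : ∀ i, g (κ * i) = stdAddChar (α * i ^ 2 + β * i + γ) * g i) :
    IsTorusInvariant (ambiguity n g ∘ shear t) := by
  refine isTorusInvariant_of_closure_eq_top hκ ?_
  rintro v (rfl | rfl) ⟨u, l⟩
  · have h := ambiguity_unit_mul_snd v hg (u + t * l) (↑v⁻¹ * l)
    rw [Units.mul_inv_cancel_left] at h
    have hv : (v : ZMod n) * ↑v⁻¹ = 1 := Units.mul_inv v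
    simp only [Function.comp_apply, torus_apply, shear_apply, h]
    congr 2
    linear_combination (-(↑v⁻¹ * l)) * ht + (t * v * l) * hv
  · simp only [Function.comp_apply, torus_apply, shear_apply, Units.val_neg, Units.val_one,
      inv_neg, inv_one, neg_one_mul, mul_neg]
    rw [← neg_add, ← Prod.neg_mk, ambiguity_neg]

end Symmetry

section Fourier

open Matrix

variable {n : ℕ} [NeZero n]

def dftMatrix (n : ℕ) [NeZero n] : Matrix (ZMod n × ZMod n) (ZMod n × ZMod n) ℂ :=
  Matrix.of fun s χ => stdAddChar (-(s.1 * χ.1 + s.2 * χ.2))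

def dft2 (h : ZMod n × ZMod n → ℂ) (χ : ZMod n × ZMod n) : ℂ :=
  ∑ s, stdAddChar (-(s.1 * χ.1 + s.2 * χ.2)) * h s

lemma sum_stdAddChar_mul_add_mul (v : ZMod n × ZMod n) :
    ∑ χ : ZMod n × ZMod n, stdAddChar (v.1 * χ.1 + v.2 * χ.2) =
      if v = 0 then (n : ℂ) ^ 2 else 0 := by
  classical
  simp only [AddChar.map_add_eq_mul, Fintype.sum_prod_type, ← Fintype.sum_mul_sum,
    mul_comm v.1, mul_comm v.2, AddChar.sum_mulShift _ (isPrimitive_stdAddChar n), ZMod.card]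
  obtain ⟨a, b⟩ := v
  by_cases ha : a = 0 <;> by_cases hb : b = 0 <;> simp [ha, hb, sq]

lemma dftMatrix_mul_conjTranspose :
    dftMatrix n * (dftMatrix n)ᴴ = ((n : ℂ) ^ 2) • (1 : Matrix _ _ ℂ) := by
  ext s s'
  simp only [mul_apply, conjTranspose_apply, dftMatrix, of_apply, RCLike.star_def,
    ← AddChar.map_neg_eq_conj, ← AddChar.map_add_eq_mul, neg_neg, Matrix.smul_apply, one_apply,
    smul_eq_mul, mul_ite, mul_one, mul_zero]
  have h := sum_stdAddChar_mul_add_mul (s' - s)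
  simp only [Prod.fst_sub, Prod.snd_sub, sub_eq_zero, eq_comm (a := s')] at h
  rw [← h]
  exact sum_congr rfl fun χ _ => by ring_nf

lemma isUnit_det_dftMatrix : IsUnit (dftMatrix n).det := by
  refine isUnit_det_of_right_inverse (B := ((n : ℂ) ^ 2)⁻¹ • (dftMatrix n)ᴴ) ?_
  rw [Matrix.mul_smul, dftMatrix_mul_conjTranspose, smul_smul,
    inv_mul_cancel₀ (by simp [NeZero.ne n]), one_smul]

lemma circulant_mul_dftMatrix (h : ZMod n × ZMod n → ℂ) :
    Matrix.of (fun p q => h (q - p)) * dftMatrix n = dftMatrix n * diagonal (dft2 h) := by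
  ext p χ
  rw [mul_diagonal, mul_apply, dft2, mul_sum, ← Equiv.sum_comp (Equiv.addRight p)]
  refine sum_congr rfl fun s _ => ?_
  simp only [dftMatrix, of_apply, Equiv.coe_addRight, add_sub_cancel_right, Prod.fst_add,
    Prod.snd_add, ← mul_assoc, ← AddChar.map_add_eq_mul]
  ring_nf

lemma rank_circulant (h : ZMod n × ZMod n → ℂ) :
    (Matrix.of fun p q => h (q - p)).rank = Fintype.card {χ // dft2 h χ ≠ 0} := by
  rw [← rank_mul_eq_left_of_isUnit_det _ _ isUnit_det_dftMatrix, circulant_mul_dftMatrix,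
    rank_mul_eq_right_of_isUnit_det _ _ isUnit_det_dftMatrix, rank_diagonal]

lemma dft2_comp_equiv (h : ZMod n × ZMod n → ℂ) (L : ZMod n × ZMod n ≃ ZMod n × ZMod n)
    (L' : ZMod n × ZMod n → ZMod n × ZMod n)
    (hL : ∀ s χ, s.1 * χ.1 + s.2 * χ.2 = (L s).1 * (L' χ).1 + (L s).2 * (L' χ).2)
    (χ : ZMod n × ZMod n) : dft2 (h ∘ L) χ = dft2 h (L' χ) := by
  conv_rhs => rw [dft2, ← Equiv.sum_comp L]
  exact sum_congr rfl fun s _ => by rw [hL s χ, Function.comp_apply]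

lemma IsTorusInvariant.dft2 {h : ZMod n × ZMod n → ℂ} (hh : IsTorusInvariant h) :
    IsTorusInvariant (dft2 h) := by
  intro v χ
  have hv : (v : ZMod n) * ↑v⁻¹ = 1 := Units.mul_inv v
  rw [← dft2_comp_equiv h (torus v⁻¹) (torus v) (fun s χ => by
    simp only [torus_apply, inv_inv]
    linear_combination (-(s.1 * χ.1) - s.2 * χ.2) * hv)]
  congr 1
  exact funext (hh v⁻¹)

lemma dft2_comp_shear (h : ZMod n × ZMod n → ℂ) (t : ZMod n) (χ : ZMod n × ZMod n) :
    dft2 (h ∘ shear t) χ = dft2 h (χ.1, χ.2 - t * χ.1) :=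
  dft2_comp_equiv h (shear t) (fun χ => (χ.1, χ.2 - t * χ.1))
    (fun s χ => by simp only [shear_apply]; ring) χ

lemma card_dft2_comp_shear_ne_zero (h : ZMod n × ZMod n → ℂ) (t : ZMod n) :
    Fintype.card {χ // dft2 (h ∘ shear t) χ ≠ 0} = Fintype.card {χ // dft2 h χ ≠ 0} :=
  Fintype.card_congr <|
    (Equiv.prodShear (Equiv.refl _) fun a => Equiv.subRight (t * a)).subtypeEquiv
      fun χ => by rw [dft2_comp_shear]; rfl

end Fourier

section Gram

variable {n : ℕ} [NeZero n]

lemma Gmat_eq_circulant (g : ZMod n → ℂ) :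
    Gmat n g = Matrix.of fun p q => ((ambiguity n g (q - p) ^ 2 : ℝ) : ℂ) := by
  ext p q
  simp only [Gmat, Matrix.of_apply, norm_inn_modT_modT]
  rfl

lemma rank_Gmat (g : ZMod n → ℂ) :
    (Gmat n g).rank =
      Fintype.card {χ // dft2 (fun s => ((ambiguity n g s ^ 2 : ℝ) : ℂ)) χ ≠ 0} := by
  rw [Gmat_eq_circulant]
  exact rank_circulant (fun s => ((ambiguity n g s ^ 2 : ℝ) : ℂ))

lemma dft2_sq_ambiguity_zero_ne_zero {g : ZMod n → ℂ} (hg : ∑ m, ‖g m‖ ^ 2 = 1) :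
    dft2 (fun s => ((ambiguity n g s ^ 2 : ℝ) : ℂ)) 0 ≠ 0 := by
  have hpos : 1 ≤ ∑ s, ambiguity n g s ^ 2 := by
    simpa [ambiguity_zero hg] using
      single_le_sum (fun s _ => sq_nonneg (ambiguity n g s)) (mem_univ (0 : ZMod n × ZMod n))
  simp only [dft2, Prod.fst_zero, Prod.snd_zero, mul_zero, add_zero, neg_zero,
    AddChar.map_zero_eq_one, one_mul, ← Complex.ofReal_sum, Complex.ofReal_ne_zero]
  linarith

variable [Fact n.Prime]

lemma ncard_range_ambiguity_le {g : ZMod n → ℂ} {t : ZMod n}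
    (hinv : IsTorusInvariant (ambiguity n g ∘ shear t)) :
    (Set.range (ambiguity n g)).ncard ≤ n + 2 := by
  simpa [EquivLike.range_comp] using hinv.ncard_range_le

lemma rank_Gmat_modEq {g : ZMod n → ℂ} {t : ZMod n}
    (hinv : IsTorusInvariant (ambiguity n g ∘ shear t)) (hg : ∑ m, ‖g m‖ ^ 2 = 1) :
    (Gmat n g).rank ≡ 1 [MOD n - 1] := by
  set H : ZMod n × ZMod n → ℂ := fun s => ((ambiguity n g s ^ 2 : ℝ) : ℂ)
  have hH : IsTorusInvariant (H ∘ shear t) := fun v p =>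
    congrArg (fun x : ℝ => ((x ^ 2 : ℝ) : ℂ)) (hinv v p)
  have h0 : dft2 (H ∘ shear t) 0 ≠ 0 := by
    rw [dft2_comp_shear, Prod.fst_zero, Prod.snd_zero, mul_zero, sub_zero, ← Prod.zero_eq_mk]
    exact dft2_sq_ambiguity_zero_ne_zero hg
  rw [rank_Gmat, ← card_dft2_comp_shear_ne_zero H t]
  simpa using hH.dft2.card_ne_zero_modEq h0

end Gram

lemma gw_zpow_choose_two {p : ℕ} [Fact p.Prime] [NeZero (2 : ZMod p)] (a b c : ℤ) (i : ZMod p) :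
    gw p ^ (a * (i.val.choose 2 : ℤ) + b * (i.val : ℤ) + c) =
      stdAddChar
        ((a : ZMod p) / 2 * i ^ 2 + ((b : ZMod p) - (a : ZMod p) / 2) * i + (c : ZMod p)) := by
  rw [gw_zpow]
  push_cast
  rw [Nat.cast_choose_two, natCast_zmod_val]
  congr 1
  ring

lemma setOf_eq_range_ambiguity {n : ℕ} [NeZero n] (g : ZMod n → ℂ) :
    {x : ℝ | ∃ k l : ZMod n, x = ‖inn n g (modT n k l g)‖} = Set.range (ambiguity n g) := by
  ext x
  simp [ambiguity, eq_comm]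

/-- let `d` be an odd prime, `κ` coprime to `d` with
`gcd(κ²-1, d) = 1`, such that `κ` generates `(ℤ/dℤ)ˣ` (i.e. has multiplicative
order `d-1`), or `d ≡ 3 mod 4` and `κ` has order `(d-1)/2`. If the unit vector
`g` satisfies `g_{κi} = ω^{a·C(i,2)+b·i+c}·g_i`, then the set of values
`|⟨g, M^k T^ℓ g⟩|` has at most `d+2` elements, and
`rank G(g) ≡ d² mod (d-1)`. -/
theorem stmt15 (d : ℕ) [NeZero d] (hp : d.Prime) (hodd : Odd d) (κ : ℤ)
    (hκ : IsCoprime κ (d : ℤ)) (hκ2 : IsCoprime (κ ^ 2 - 1) (d : ℤ))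
    (horder : orderOf ((κ : ZMod d)) = d - 1 ∨
      (d % 4 = 3 ∧ orderOf ((κ : ZMod d)) = (d - 1) / 2))
    (a b c : ℤ) (g : ZMod d → ℂ)
    (hg : ∑ n : ZMod d, ‖g n‖ ^ 2 = 1)
    (hsym : ∀ i : ZMod d,
      g ((κ : ZMod d) * i) =
        gw d ^ (a * (i.val.choose 2 : ℤ) + b * (i.val : ℤ) + c) * g i) :
    {x : ℝ | ∃ k l : ZMod d, x = ‖inn d g (modT d k l g)‖}.ncard
        ≤ d + 2 ∧
    (Gmat d g).rank % (d - 1) = d ^ 2 % (d - 1) := by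
  have := Fact.mk hp
  have : NeZero (2 : ZMod d) :=
    ⟨Ring.two_ne_zero (by rw [ZMod.ringChar_zmod_n]; rintro rfl; exact absurd hodd (by decide))⟩
  have isUnit_of_isCoprime {z : ℤ} (hz : IsCoprime z d) : IsUnit (z : ZMod d) :=
    isCoprime_zero_right.mp (by simpa using hz.map (Int.castRingHom (ZMod d)))
  obtain ⟨κu, hκu⟩ := isUnit_of_isCoprime hκ
  have hclosure : Subgroup.closure {κu, -1} = ⊤ :=
    ZMod.closure_units_neg_one_eq_top (by rwa [← orderOf_units, hκu])
  have ht : (a / (κ ^ 2 - 1) : ZMod d) * (κu ^ 2 - 1) = 2 * (a / 2) := by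
    have := (isUnit_of_isCoprime hκ2).ne_zero
    push_cast at this
    rw [hκu]
    field_simp
  have hinv := isTorusInvariant_ambiguity_comp_shear (g := g) hclosure ht
    (fun i => by rw [hκu, hsym, gw_zpow_choose_two])
  refine ⟨setOf_eq_range_ambiguity g ▸ ncard_range_ambiguity_le hinv, ?_⟩
  exact (rank_Gmat_modEq hinv hg).trans ((Nat.modEq_sub hp.one_le).pow 2).symm
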